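/- arXiv:2011.03101 — 3 statements merged into one kernel-verified Lean document; each statement's English description precedes it below -/
import Mathlib

section
/- For every nonnegative integer n and every nonnegative integer p, the sum over k from 0 to n of S(n,k) * (-1)^k * k! * h_k^{(p)} equals (-1)^n * n * p^{n-1}, where h_k^{(p)} are hyperharmonic numbers (interpret n * p^{n-1} as 0 when n = 0). -/
/-- Stirling numbers of the second kind. -/
def S2 : ℕ → ℕ → ℕ
  | 0, 0 => 1
  | 0, _ + 1 => 0
  | _ + 1, 0 => 0
  | n + 1, k + 1 => (k + 1) * S2 n (k + 1) + S2 n k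

/-- Hyperharmonic numbers `h_n^{(p)}`: `h_n^{(1)} = H_n`,
`h_n^{(p+1)} = ∑_{j=1}^n h_j^{(p)}`, `h_0^{(p)} = 0`. -/
def hyperharmonic : ℕ → ℕ → ℚ
  | 0, n => if n = 0 then 0 else (n : ℚ)⁻¹
  | p + 1, n => ∑ j ∈ Finset.Icc 1 n, hyperharmonic p j

/-- `Gq p k = k! * h_k^{(p)}`. -/
def Gq (p k : ℕ) : ℚ := (Nat.factorial k : ℚ) * hyperharmonic p k

/-- Rising factorial `p (p+1) ⋯ (p+k-1)`. -/
def ee (p k : ℕ) : ℚ := ∏ i ∈ Finset.range k, ((p : ℚ) + i)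

lemma hh_zero (p : ℕ) : hyperharmonic p 0 = 0 := by
  cases p <;> simp [hyperharmonic]

lemma hh_one (p : ℕ) : hyperharmonic p 1 = 1 := by
  induction p with
  | zero => norm_num [hyperharmonic]
  | succ p ih => simp [hyperharmonic, ih]

lemma hh_succ (p k : ℕ) :
    hyperharmonic (p + 1) (k + 1) = hyperharmonic (p + 1) k + hyperharmonic p (k + 1) := by
  show (∑ j ∈ Finset.Icc 1 (k + 1), hyperharmonic p j) = _
  rw [Finset.sum_Icc_succ_top (by omega)]
  rfl

lemma ee_zero (p : ℕ) : ee p 0 = 1 := by simp [ee]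

lemma ee_succ (p k : ℕ) : ee p (k + 1) = ee p k * ((p : ℚ) + k) := by
  simp [ee, Finset.prod_range_succ]

lemma ee_shift (p k : ℕ) : ee p (k + 1) = ee (p + 1) k * (p : ℚ) := by
  rw [ee, Finset.prod_range_succ']
  simp only [Nat.cast_zero, add_zero, ee]
  congr 1
  refine Finset.prod_congr rfl fun i _ => ?_
  push_cast
  ring

lemma ee_zero_left (k : ℕ) : ee 0 (k + 1) = 0 := by
  refine Finset.prod_eq_zero (Finset.mem_range.2 (Nat.succ_pos k)) ?_
  simp

lemma Gq_zero (p : ℕ) : Gq p 0 = 0 := by simp [Gq, hh_zero]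

lemma Gq_one (p : ℕ) : Gq p 1 = 1 := by simp [Gq, hh_one, Nat.factorial]

lemma Gq_zero_left (k : ℕ) : Gq 0 (k + 1) = (Nat.factorial k : ℚ) := by
  have h : ((k : ℚ) + 1) ≠ 0 := by positivity
  simp only [Gq, hyperharmonic, Nat.factorial_succ, if_neg (Nat.succ_ne_zero k)]
  push_cast
  field_simp

lemma Gq_pascal (p k : ℕ) :
    Gq (p + 1) (k + 1) = ((k : ℚ) + 1) * Gq (p + 1) k + Gq p (k + 1) := by
  simp only [Gq, hh_succ, Nat.factorial_succ]
  push_cast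
  ring

lemma M_and_L : ∀ k p : ℕ,
    ((p : ℚ) * Gq (p + 1) k = ((p : ℚ) + k) * Gq p k + ee p k - ee (p + 1) k) ∧
    (Gq p (k + 1) = ((p : ℚ) + k) * Gq p k + ee p k) := by
  intro k
  induction k with
  | zero =>
    intro p
    constructor
    · simp [Gq_zero, ee_zero]
    · simp [Gq_zero, Gq_one, ee_zero]
  | succ k ih =>
    have Mnew : ∀ p : ℕ,
        (p : ℚ) * Gq (p + 1) (k + 1)
          = ((p : ℚ) + (k + 1)) * Gq p (k + 1) + ee p (k + 1) - ee (p + 1) (k + 1) := by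
      intro p
      have hP := Gq_pascal p k
      have hM := (ih p).1
      have hL := (ih p).2
      have he2 := ee_succ (p + 1) k
      have hsh := ee_shift p k
      push_cast at he2 ⊢
      linear_combination (p : ℚ) * hP + ((k : ℚ) + 1) * hM - ((k : ℚ) + 1) * hL + he2 - hsh
    have Lnew : ∀ p : ℕ, Gq p (k + 1 + 1) = ((p : ℚ) + (k + 1)) * Gq p (k + 1) + ee p (k + 1) := by
      intro p
      induction p with
      | zero =>
        rw [Gq_zero_left (k + 1), Gq_zero_left k, ee_zero_left k, Nat.factorial_succ]
        push_cast
        ring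
      | succ p ihp =>
        have hP := Gq_pascal p (k + 1)
        have hM := Mnew p
        push_cast at hP ihp hM ⊢
        linear_combination hP + ihp - hM
    intro p
    constructor
    · push_cast
      exact Mnew p
    · push_cast
      exact Lnew p

lemma S2_eq_zero : ∀ {n k : ℕ}, n < k → S2 n k = 0 := by
  intro n
  induction n with
  | zero =>
    intro k h
    match k, h with
    | k + 1, _ => rfl
  | succ n ih =>
    intro k h
    match k, h with
    | k + 1, h =>
      show (k + 1) * S2 n (k + 1) + S2 n k = 0
      rw [ih (by omega), ih (by omega)]
      simp

/-- Auxiliary weight for the telescoping argument. -/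
def wt (n : ℕ) (f : ℕ → ℚ) (j : ℕ) : ℚ := (j : ℚ) * (S2 n j : ℚ) * (-1) ^ j * f j

lemma tele (p n : ℕ) (f d : ℕ → ℚ) (hf : ∀ k, f (k + 1) = ((p : ℚ) + k) * f k + d k) :
    ∑ k ∈ Finset.range (n + 2), (S2 (n + 1) k : ℚ) * (-1) ^ k * f k
      = -(p : ℚ) * (∑ k ∈ Finset.range (n + 1), (S2 n k : ℚ) * (-1) ^ k * f k)
        - ∑ k ∈ Finset.range (n + 1), (S2 n k : ℚ) * (-1) ^ k * d k := by
  rw [Finset.sum_range_succ']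
  have h0 : (S2 (n + 1) 0 : ℚ) * (-1) ^ 0 * f 0 = 0 := by
    show ((0 : ℕ) : ℚ) * (-1) ^ 0 * f 0 = 0
    simp
  rw [h0, add_zero]
  have key : ∀ k ∈ Finset.range (n + 1),
      (S2 (n + 1) (k + 1) : ℚ) * (-1) ^ (k + 1) * f (k + 1)
        = (wt n f (k + 1) - wt n f k)
          + (-(p : ℚ) * ((S2 n k : ℚ) * (-1) ^ k * f k) - (S2 n k : ℚ) * (-1) ^ k * d k) := by
    intro k _
    simp only [wt]
    rw [show S2 (n + 1) (k + 1) = (k + 1) * S2 n (k + 1) + S2 n k from rfl, hf k]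
    push_cast
    ring
  rw [Finset.sum_congr rfl key, Finset.sum_add_distrib, Finset.sum_range_sub (wt n f)]
  have hw1 : wt n f (n + 1) = 0 := by simp [wt, S2_eq_zero (Nat.lt_succ_self n)]
  have hw0 : wt n f 0 = 0 := by simp [wt]
  rw [hw1, hw0, sub_zero, zero_add, Finset.sum_sub_distrib, ← Finset.mul_sum]

lemma U_lemma (p : ℕ) : ∀ n : ℕ,
    ∑ k ∈ Finset.range (n + 1), (S2 n k : ℚ) * (-1) ^ k * ee p k = (-(p : ℚ)) ^ n := by
  intro n
  induction n with
  | zero => simp [S2, ee_zero]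
  | succ n ih =>
    rw [tele p n (ee p) (fun _ => 0) (fun k => by rw [ee_succ]; ring), ih]
    simp [pow_succ]
    ring

theorem stirling2_hyperharmonic_transform (n p : ℕ) :
    ∑ k ∈ Finset.range (n + 1),
      (S2 n k : ℚ) * (-1) ^ k * (Nat.factorial k) * hyperharmonic p k =
      if n = 0 then 0 else (-1) ^ n * n * (p : ℚ) ^ (n - 1) := by
  induction n with
  | zero => simp [S2, hh_zero]
  | succ n ih =>
    have hstep : ∑ k ∈ Finset.range (n + 1 + 1),
        (S2 (n + 1) k : ℚ) * (-1) ^ k * (Nat.factorial k) * hyperharmonic p k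
          = ∑ k ∈ Finset.range (n + 2), (S2 (n + 1) k : ℚ) * (-1) ^ k * Gq p k := by
      refine Finset.sum_congr rfl fun k _ => ?_
      simp only [Gq]
      ring
    rw [hstep, tele p n (Gq p) (ee p) (fun k => (M_and_L k p).2), U_lemma p n]
    have hsum : ∑ k ∈ Finset.range (n + 1), (S2 n k : ℚ) * (-1) ^ k * Gq p k
        = if n = 0 then 0 else (-1) ^ n * n * (p : ℚ) ^ (n - 1) := by
      rw [← ih]
      refine Finset.sum_congr rfl fun k _ => ?_
      simp only [Gq]
      ring
    rw [hsum, if_neg (Nat.succ_ne_zero n)]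
    cases n with
    | zero => norm_num
    | succ m =>
      rw [if_neg (Nat.succ_ne_zero m)]
      have : (-(p : ℚ)) ^ (m + 1) = (-1) ^ (m + 1) * (p : ℚ) ^ (m + 1) := by
        rw [neg_pow]
      rw [this]
      simp only [Nat.add_sub_cancel]
      push_cast
      ring
end

section
/- For every nonnegative integer n and real x, B_n(x) = sum over k from 0 to n of S(n,k) * k! * (sum over j from 0 to k of binomial(x,j) * (-1)^{k-j} / (k-j+1)), where B_n(x) is the n-th Bernoulli polynomial. -/
/-- Generalized binomial coefficient `x(x-1)⋯(x-k+1)/k!` for real `x`. -/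
noncomputable def genBinom (x : ℝ) (k : ℕ) : ℝ :=
  (∏ i ∈ Finset.range k, (x - i)) / (Nat.factorial k)


section Aux
open Polynomial Finset

noncomputable def bp (k : ℕ) : ℝ[X] := C ((k.factorial : ℝ))⁻¹ * ∏ i ∈ range k, (X - C (i:ℝ))

lemma bp_eval (x : ℝ) (k : ℕ) : (bp k).eval x = genBinom x k := by
  simp [bp, genBinom, div_eq_inv_mul, eval_prod]

lemma bp_zero : bp 0 = 1 := by simp [bp]

lemma bp_rec (k : ℕ) : (X - C (k:ℝ)) * bp k = (((k:ℝ))+1) • bp (k+1) := by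
  have h : ((k:ℝ)+1) * (((k+1).factorial:ℝ))⁻¹ = ((k.factorial:ℝ))⁻¹ := by
    rw [Nat.factorial_succ]
    push_cast
    rw [mul_inv, ← mul_assoc, mul_inv_cancel₀ (by positivity : ((k:ℝ)+1) ≠ 0), one_mul]
  rw [smul_eq_C_mul, bp, bp, prod_range_succ]
  conv_rhs => rw [← mul_assoc, ← C_mul, h]
  ring

lemma bp_step (j : ℕ) (y : ℝ) :
    (X - C y) * bp j = (((j:ℝ))+1) • bp (j+1) + ((j:ℝ) - y) • bp j := by
  rw [← bp_rec, smul_eq_C_mul, C_sub]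
  ring

lemma S2_zero_of_lt : ∀ n k, n < k → S2 n k = 0
  | 0, 0 => by omega
  | 0, k+1 => fun _ => rfl
  | n+1, 0 => by omega
  | n+1, k+1 => fun h => by
      rw [S2, S2_zero_of_lt n (k+1) (by omega), S2_zero_of_lt n k (by omega)]; ring

lemma stirling (n : ℕ) (x : ℝ) :
    x ^ n = ∑ k ∈ range (n+1), (S2 n k : ℝ) * (k.factorial : ℝ) * genBinom x k := by
  induction n with
  | zero => simp [S2, genBinom]
  | succ n ih =>
    have hx : ∀ k : ℕ, x * genBinom x k
        = ((k:ℝ)+1) * genBinom x (k+1) + (k:ℝ) * genBinom x k := by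
      intro k
      have := congrArg (eval x) (bp_step k 0)
      simpa [bp_eval, sub_zero] using this
    have key : x ^ (n+1) = ∑ k ∈ range (n+1),
        ((S2 n k : ℝ) * k.factorial * (((k:ℝ)+1) * genBinom x (k+1))
          + (S2 n k : ℝ) * k.factorial * ((k:ℝ) * genBinom x k)) := by
      rw [pow_succ, ih, Finset.sum_mul]
      refine Finset.sum_congr rfl fun k _ => ?_
      rw [mul_assoc, mul_comm (genBinom x k) x, hx k, mul_add]
    rw [key, Finset.sum_add_distrib,
      Finset.sum_range_succ' (fun k => (S2 (n+1) k : ℝ) * (k.factorial : ℝ) * genBinom x k),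
      show ((S2 (n+1) 0 : ℝ)) * ((Nat.factorial 0 : ℕ) : ℝ) * genBinom x 0 = 0 by
        norm_num [show S2 (n+1) 0 = 0 from rfl], add_zero]
    have expand : ∀ i ∈ range (n+1),
        ((S2 (n+1) (i+1) : ℝ)) * (((i+1).factorial : ℕ) : ℝ) * genBinom x (i+1)
        = (S2 n i : ℝ) * i.factorial * (((i:ℝ)+1) * genBinom x (i+1))
          + ((i:ℝ)+1) * ((S2 n (i+1) : ℝ) * (i+1).factorial * genBinom x (i+1)) := by
      intro i _
      rw [show S2 (n+1) (i+1) = (i+1) * S2 n (i+1) + S2 n i from rfl]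
      push_cast [Nat.factorial_succ]
      ring
    rw [Finset.sum_congr rfl expand, Finset.sum_add_distrib]
    congr 1
    rw [Finset.sum_range_succ
        (fun i => ((i:ℝ)+1) * ((S2 n (i+1) : ℝ) * ((i+1).factorial : ℝ) * genBinom x (i+1))),
      S2_zero_of_lt n (n+1) (by omega)]
    simp only [Nat.cast_zero, zero_mul, mul_zero, add_zero]
    rw [Finset.sum_range_succ' (fun k => (S2 n k : ℝ) * (k.factorial : ℝ) * ((k:ℝ) * genBinom x k))]
    simp only [Nat.cast_zero, zero_mul, mul_zero, add_zero]
    refine Finset.sum_congr rfl fun i _ => ?_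
    push_cast [Nat.factorial_succ]
    ring

noncomputable def cc (k j : ℕ) : ℝ := (-1 : ℝ)^(k-j) / ((k:ℝ) - j + 1)

lemma cc_coef (i k : ℕ) (h : i < k) :
    cc k i * ((i:ℝ)+1) + cc k (i+1) * (((i:ℝ)+1) - ((k:ℝ)+1))
      = (((k:ℝ))+2) * cc (k+1) (i+1) := by
  obtain ⟨d, rfl⟩ : ∃ d, k = i + d + 1 := ⟨k - i - 1, by omega⟩
  have e1 : i + d + 1 - i = d + 1 := by omega
  have e2 : i + d + 1 - (i + 1) = d := by omega
  have e3 : i + d + 1 + 1 - (i + 1) = d + 1 := by omega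
  simp only [cc, e1, e2, e3]
  push_cast
  rw [pow_succ]
  rw [show ((i:ℝ) + ↑d + 1 - ↑i + 1) = (d:ℝ)+2 by ring,
    show ((i:ℝ) + ↑d + 1 - (↑i + 1) + 1) = (d:ℝ)+1 by ring,
    show ((i:ℝ) + ↑d + 1 + 1 - (↑i + 1) + 1) = (d:ℝ)+2 by ring]
  have h1 : ((d:ℝ)) + 1 ≠ 0 := by positivity
  have h2 : ((d:ℝ)) + 2 ≠ 0 := by positivity
  field_simp
  ring

lemma cc_top (k : ℕ) : cc k k * ((k:ℝ)+1) + 1 = (((k:ℝ))+2) * cc (k+1) (k+1) := by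
  simp only [cc, Nat.sub_self, pow_zero]
  rw [show ((k:ℝ) - k + 1) = 1 by ring,
    show (((k:ℕ)+1 : ℕ):ℝ) - ((k:ℕ)+1 : ℕ) + 1 = 1 by push_cast; ring]
  push_cast
  ring

lemma cc_bot (k : ℕ) : cc k 0 * ((0:ℝ) - ((k:ℝ)+1)) = (((k:ℝ))+2) * cc (k+1) 0 := by
  have h1 : ((k:ℝ)) + 1 ≠ 0 := by positivity
  have h2 : ((k:ℝ)) + 2 ≠ 0 := by positivity
  simp only [cc, Nat.sub_zero, Nat.cast_zero]
  push_cast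
  rw [pow_succ]
  rw [show ((k:ℝ) - 0 + 1) = (k:ℝ)+1 by ring, show ((k:ℝ) + 1 - 0 + 1) = (k:ℝ)+2 by ring]
  field_simp
  ring

lemma derivD : ∀ k : ℕ, derivative (bp (k+1)) = ∑ j ∈ range (k+1), cc k j • bp j
  | 0 => by
    simp [bp, cc, prod_range_succ, derivative_mul]
  | k+1 => by
    have hrec := congrArg derivative (bp_rec (k+1))
    rw [derivative_smul, derivative_mul, derivative_sub, derivative_X, derivative_C,
      sub_zero, one_mul, derivD k] at hrec
    push_cast at hrec
    have hinj : Function.Injective (fun p : ℝ[X] => (((k:ℝ)+1)+1) • p) := by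
      intro a b hab
      have h2 : (((k:ℝ)+1)+1) ≠ 0 := by positivity
      simpa [smul_smul, inv_mul_cancel₀ h2] using congrArg (fun p => (((k:ℝ)+1)+1)⁻¹ • p) hab
    apply hinj
    simp only []
    rw [← hrec]
    have hmul : (X - C ((k:ℝ)+1)) * ∑ j ∈ range (k+1), cc k j • bp j
        = ∑ j ∈ range (k+1), ((cc k j * ((j:ℝ)+1)) • bp (j+1)
            + (cc k j * ((j:ℝ) - ((k:ℝ)+1))) • bp j) := by
      rw [Finset.mul_sum]
      refine Finset.sum_congr rfl fun j _ => ?_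
      rw [mul_smul_comm, bp_step j ((k:ℝ)+1), smul_add, smul_smul, smul_smul]
    rw [hmul, Finset.sum_add_distrib, Finset.smul_sum]
    simp only [smul_smul]
    rw [Finset.sum_range_succ' (fun j => ((((k:ℝ)+1+1)) * cc (k+1) j) • bp j),
      Finset.sum_range_succ' (fun j => (cc k j * ((j:ℝ) - ((k:ℝ)+1))) • bp j),
      Finset.sum_range_succ (fun j => (cc k j * ((j:ℝ)+1)) • bp (j+1)),
      Finset.sum_range_succ (fun i => ((((k:ℝ)+1+1)) * cc (k+1) (i+1)) • bp (i+1))]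
    have hsum : ∑ i ∈ range k, (cc k i * ((i:ℝ)+1)) • bp (i+1)
        + ∑ i ∈ range k, (cc k (i+1) * (((i+1:ℕ):ℝ) - ((k:ℝ)+1))) • bp (i+1)
        = ∑ i ∈ range k, ((((k:ℝ)+1+1)) * cc (k+1) (i+1)) • bp (i+1) := by
      rw [← Finset.sum_add_distrib]
      refine Finset.sum_congr rfl fun i hi => ?_
      rw [← add_smul]
      congr 1
      push_cast
      rw [show (k:ℝ)+1+1 = (k:ℝ)+2 by ring]
      exact cc_coef i k (mem_range.mp hi)
    have htop : bp (k+1) + (cc k k * ((k:ℝ)+1)) • bp (k+1)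
        = ((((k:ℝ)+1+1)) * cc (k+1) (k+1)) • bp (k+1) := by
      rw [show (((k:ℝ)+1+1) * cc (k+1) (k+1)) = cc k k * ((k:ℝ)+1) + 1 by
        rw [show (k:ℝ)+1+1 = (k:ℝ)+2 by ring, ← cc_top k]]
      rw [add_smul, one_smul, add_comm]
    have hbot : (cc k 0 * (((0:ℕ):ℝ) - ((k:ℝ)+1))) • bp 0
        = ((((k:ℝ)+1+1)) * cc (k+1) 0) • bp 0 := by
      congr 1
      push_cast
      rw [show (k:ℝ)+1+1 = (k:ℝ)+2 by ring]
      exact cc_bot k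
    linear_combination hsum + htop + hbot

lemma periodic_const (p : ℝ[X]) (h : ∀ x : ℝ, p.eval (x+1) = p.eval x) :
    p = C (p.eval 0) := by
  have hq : ∀ m : ℕ, p.eval (m:ℝ) = p.eval 0 := by
    intro m
    induction m with
    | zero => simp
    | succ m ih => push_cast; rw [h, ih]
  have h0 : p - C (p.eval 0) = 0 := by
    apply eq_zero_of_infinite_isRoot
    apply Set.infinite_of_injective_forall_mem (f := fun m : ℕ => (m:ℝ))
    · exact fun a b hab => Nat.cast_injective hab
    · intro m; simp [IsRoot, hq m]
  exact sub_eq_zero.mp h0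

lemma genBinom_shift (x : ℝ) (k : ℕ) :
    genBinom (x+1) (k+1) = genBinom x (k+1) + genBinom x k := by
  have hp : ∏ i ∈ range (k+1), ((x+1) - (i:ℝ)) = (∏ i ∈ range k, (x - (i:ℝ))) * (x+1) := by
    rw [Finset.prod_range_succ' (fun i => (x+1) - (i:ℝ))]
    rw [show ((x+1) - ((0:ℕ):ℝ)) = x + 1 by push_cast; ring]
    congr 1
    refine Finset.prod_congr rfl fun i _ => ?_
    push_cast; ring
  have hfac : (((k+1).factorial : ℕ) : ℝ) = ((k:ℝ)+1) * (k.factorial : ℝ) := by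
    rw [Nat.factorial_succ]; push_cast; ring
  have h1 : (k.factorial : ℝ) ≠ 0 := by positivity
  have h2 : ((k:ℝ)+1) ≠ 0 := by positivity
  simp only [genBinom, hp, prod_range_succ, hfac]
  field_simp
  ring

lemma bern_shift (n : ℕ) (x : ℝ) :
    ((Polynomial.bernoulli (n+1)).map (algebraMap ℚ ℝ)).eval (x+1)
      = ((Polynomial.bernoulli (n+1)).map (algebraMap ℚ ℝ)).eval x + ((n:ℝ)+1) * x^n := by
  have hq : (Polynomial.bernoulli (n+1)).comp (X + 1)
      = Polynomial.bernoulli (n+1) + C ((n:ℚ)+1) * X^n := by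
    apply Polynomial.funext
    intro q
    rw [eval_comp]
    simp only [eval_add, eval_mul, eval_pow, eval_X, eval_one, eval_C]
    rw [show q + 1 = 1 + q by ring, Polynomial.bernoulli_eval_one_add]
    push_cast
    norm_num
  have := congrArg (fun p => (Polynomial.map (algebraMap ℚ ℝ) p).eval (x)) hq
  simp only [Polynomial.map_comp, Polynomial.map_add, Polynomial.map_mul, Polynomial.map_pow,
    Polynomial.map_X, Polynomial.map_one, Polynomial.map_C, eval_comp, eval_add, eval_mul,
    eval_pow, eval_X, eval_one, eval_C] at this
  rw [this]
  push_cast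
  ring

theorem bernoulli_poly_eq_stirling2_sum (n : ℕ) (x : ℝ) :
    (Polynomial.aeval x) (Polynomial.bernoulli n) =
      ∑ k ∈ Finset.range (n + 1),
        (S2 n k : ℝ) * (Nat.factorial k) *
          ∑ j ∈ Finset.range (k + 1),
            genBinom x j * (-1) ^ (k - j) / ((k : ℝ) - j + 1) := by
  classical
  set f := algebraMap ℚ ℝ with hf
  set G : ℝ[X] := ∑ k ∈ range (n+1), ((S2 n k : ℝ) * (k.factorial : ℝ)) • bp (k+1) with hG
  have hGeval : ∀ y : ℝ, G.eval y
      = ∑ k ∈ range (n+1), (S2 n k : ℝ) * (k.factorial : ℝ) * genBinom y (k+1) := by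
    intro y
    rw [hG, eval_finset_sum]
    exact Finset.sum_congr rfl fun k _ => by rw [eval_smul, bp_eval, smul_eq_mul]
  have hper : ∀ y : ℝ, ((Polynomial.bernoulli (n+1)).map f - ((n:ℝ)+1) • G).eval (y+1)
      = ((Polynomial.bernoulli (n+1)).map f - ((n:ℝ)+1) • G).eval y := by
    intro y
    simp only [eval_sub, eval_smul, smul_eq_mul]
    rw [bern_shift, hGeval, hGeval]
    have hsum : ∑ k ∈ range (n+1), (S2 n k:ℝ) * (k.factorial : ℝ) * genBinom (y+1) (k+1)
        = ∑ k ∈ range (n+1), ((S2 n k:ℝ) * (k.factorial : ℝ) * genBinom y (k+1)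
            + (S2 n k:ℝ) * (k.factorial : ℝ) * genBinom y k) :=
      Finset.sum_congr rfl fun k _ => by rw [genBinom_shift]; ring
    rw [hsum, Finset.sum_add_distrib, ← stirling n y]
    ring
  have hconst := periodic_const _ hper
  have hder := congrArg derivative hconst
  rw [derivative_sub, derivative_smul, derivative_C, derivative_map,
    Polynomial.derivative_bernoulli_add_one, Polynomial.map_mul,
    Polynomial.map_add, Polynomial.map_natCast, Polynomial.map_one] at hder
  have hkey : ((n:ℝ)+1) • (Polynomial.bernoulli n).map f = ((n:ℝ)+1) • derivative G := by
    have hC : ((n:ℝ[X])+1) * (Polynomial.bernoulli n).map f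
        = ((n:ℝ)+1) • (Polynomial.bernoulli n).map f := by
      rw [smul_eq_C_mul, C_add, C_1, C_eq_natCast]
    rw [← hC]
    exact sub_eq_zero.mp hder
  have hne : ((n:ℝ)+1) ≠ 0 := by positivity
  have hmain : (Polynomial.bernoulli n).map f = derivative G :=
    smul_right_injective ℝ[X] hne hkey
  rw [Polynomial.aeval_def, ← Polynomial.eval_map, hmain, hG, derivative_sum, eval_finset_sum]
  refine Finset.sum_congr rfl fun k hk => ?_
  rw [derivative_smul, derivD k, eval_smul, smul_eq_mul, eval_finset_sum]
  congr 1
  refine Finset.sum_congr rfl fun j hj => ?_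
  rw [eval_smul, smul_eq_mul, bp_eval, cc]
  ring

end Aux
end

section
/- For every integer n ≥ 1, B_{n-1} = sum over k from 1 to n of S(n,k) * (-1)^{k-1} * (k-1)! * H_k, where B_{n-1} is a Bernoulli number and H_k the k-th harmonic number. -/
open Finset Nat

theorem S2_eq_stirlingSecond : S2 = stirlingSecond := by
  funext n k
  induction n generalizing k with
  | zero => cases k <;> rfl
  | succ n ih => cases k <;> simp [S2, stirlingSecond_succ_succ, ih]

theorem sum_range_choose_mul_stirlingSecond (n j : ℕ) :
    ∑ k ∈ range (n + 1), n.choose k * stirlingSecond k j = stirlingSecond (n + 1) (j + 1) := by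
  induction n generalizing j with
  | zero => simp [stirlingSecond_succ_succ]
  | succ n ih =>
    have pascal := sum_choose_succ_mul (fun k _ => stirlingSecond k j) n
    simp only [Nat.cast_id] at pascal
    rw [pascal, ih]
    cases j with
    | zero => simp [stirlingSecond_one_right]
    | succ i =>
      have shifted : ∑ k ∈ range (n + 1), n.choose k * stirlingSecond (k + 1) (i + 1) =
          (i + 1) * ∑ k ∈ range (n + 1), n.choose k * stirlingSecond k (i + 1) +
            ∑ k ∈ range (n + 1), n.choose k * stirlingSecond k i := by
        simp only [stirlingSecond_succ_succ _ i, mul_add, sum_add_distrib, mul_left_comm _ (i + 1),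
          ← mul_sum]
      rw [shifted, ih, ih, stirlingSecond_succ_succ (n + 1) (i + 1)]
      ring

theorem sum_range_neg_one_pow_mul_factorial_mul_stirlingSecond {R : Type*} [CommRing R] (m : ℕ) :
    ∑ i ∈ range (m + 1), (-1 : R) ^ i * i ! * stirlingSecond (m + 1) (i + 1) =
      if m = 0 then 1 else 0 := by
  set g : ℕ → R := fun i => (-1) ^ i * i ! * stirlingSecond m i
  have telescope : ∀ i, (-1 : R) ^ i * i ! * stirlingSecond (m + 1) (i + 1) = g i - g (i + 1) := by
    intro i
    simp only [g, stirlingSecond_succ_succ, factorial_succ]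
    push_cast
    ring
  rw [sum_congr rfl fun i _ => telescope i, sum_range_sub']
  cases m <;> simp [g, stirlingSecond_eq_zero_of_lt]

theorem eq_bernoulli_of_sum_choose_mul {b : ℕ → ℚ}
    (h : ∀ m, ∑ k ∈ range (m + 1), ((m + 1).choose k : ℚ) * b k = if m = 0 then 1 else 0)
    (m : ℕ) : b m = bernoulli m := by
  induction m using Nat.strong_induction_on with
  | _ m ih =>
    have hb := h m
    have hB := sum_bernoulli (m + 1)
    rw [sum_range_succ, sum_congr rfl fun k hk => by rw [ih k (mem_range.1 hk)]] at hb
    rw [sum_range_succ] at hB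
    simp only [add_eq_right] at hB
    have hc : ((m + 1).choose m : ℚ) ≠ 0 := by rw [Nat.choose_succ_self_right]; positivity
    exact mul_left_cancel₀ hc (by linarith)

theorem sum_stirlingSecond_succ_mul {R : Type*} [CommSemiring R] {f g : ℕ → R} (h0 : g 0 = f 0)
    (hsucc : ∀ i, g (i + 1) = (i + 1) * f i + f (i + 1)) (m : ℕ) :
    ∑ i ∈ range (m + 1), stirlingSecond (m + 1) (i + 1) * f i =
      ∑ j ∈ range (m + 1), stirlingSecond m j * g j := by
  have recurrence : ∀ i, (stirlingSecond (m + 1) (i + 1) : R) * f i =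
      stirlingSecond m (i + 1) * ((i + 1) * f i) + stirlingSecond m i * f i := by
    intro i
    rw [stirlingSecond_succ_succ]
    push_cast
    ring
  rw [sum_congr rfl fun i _ => recurrence i, sum_add_distrib, sum_range_succ,
    stirlingSecond_eq_zero_of_lt m.lt_add_one, sum_range_succ' (fun i => _ * f i),
    sum_range_succ' (fun j => _ * g j), h0]
  simp only [hsucc, mul_add, sum_add_distrib, Nat.cast_zero, zero_mul, add_zero]
  ring

theorem bernoulli_eq_sum_stirlingSecond (m : ℕ) :
    bernoulli m = ∑ j ∈ range (m + 1), stirlingSecond m j * ((-1) ^ j * j ! / (j + 1) : ℚ) := by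
  refine (eq_bernoulli_of_sum_choose_mul
    (b := fun m => ∑ j ∈ range (m + 1), stirlingSecond m j * ((-1) ^ j * j ! / (j + 1) : ℚ))
    (fun m => ?_) m).symm
  have extend : ∀ k ∈ range (m + 1),
      ∑ j ∈ range (k + 1), stirlingSecond k j * ((-1) ^ j * j ! / (j + 1) : ℚ) =
        ∑ j ∈ range (m + 1), stirlingSecond k j * ((-1) ^ j * j ! / (j + 1) : ℚ) := by
    intro k hk
    refine sum_subset (range_subset_range.2 (mem_range.1 hk)) fun j _ hj => ?_
    rw [stirlingSecond_eq_zero_of_lt (by simpa using hj), Nat.cast_zero, zero_mul]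
  have binomial : ∀ j, ∑ k ∈ range (m + 1), ((m + 1).choose k : ℚ) * stirlingSecond k j =
      (j + 1) * stirlingSecond (m + 1) (j + 1) := by
    intro j
    have := congrArg (Nat.cast : ℕ → ℚ) (sum_range_choose_mul_stirlingSecond (m + 1) j)
    rw [Nat.cast_sum, sum_range_succ, stirlingSecond_succ_succ] at this
    push_cast [choose_self] at this
    linarith
  calc ∑ k ∈ range (m + 1), ((m + 1).choose k : ℚ) *
        ∑ j ∈ range (k + 1), stirlingSecond k j * ((-1) ^ j * j ! / (j + 1) : ℚ)
      = ∑ j ∈ range (m + 1), (∑ k ∈ range (m + 1), ((m + 1).choose k : ℚ) * stirlingSecond k j) *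
          ((-1) ^ j * j ! / (j + 1)) := by
        rw [sum_congr rfl fun k hk => by rw [extend k hk]]
        simp only [mul_sum, sum_mul, mul_assoc]
        exact sum_comm
    _ = ∑ j ∈ range (m + 1), (-1 : ℚ) ^ j * j ! * stirlingSecond (m + 1) (j + 1) := by
        refine sum_congr rfl fun j _ => ?_
        rw [binomial]
        field_simp
    _ = if m = 0 then 1 else 0 := sum_range_neg_one_pow_mul_factorial_mul_stirlingSecond m

theorem bernoulli_eq_stirling2_harmonic (n : ℕ) (hn : 1 ≤ n) :
    bernoulli (n - 1) =
      ∑ k ∈ Finset.Icc 1 n,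
        (S2 n k : ℚ) * (-1) ^ (k - 1) * (Nat.factorial (k - 1)) * harmonic k := by
  obtain ⟨m, rfl⟩ := exists_add_of_le hn
  rw [add_tsub_cancel_left, bernoulli_eq_sum_stirlingSecond, S2_eq_stirlingSecond, add_comm,
    ← Ico_add_one_right_eq_Icc, sum_Ico_eq_sum_range, add_tsub_cancel_right]
  symm
  simp only [add_comm 1, add_tsub_cancel_right, mul_assoc]
  refine sum_stirlingSecond_succ_mul (by simp) (fun i => ?_) m
  rw [harmonic_succ (i + 1), factorial_succ]
  push_cast
  field_simp
  ring
end
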